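/- Every polynomial matrix function A(z) = 1 + z A₁ + … + zⁿ A_n with real matrix coefficients and det A(z) ≡ 1 admits a factorization A(z) = (1 + p₁(z) J P₁) ⋯ (1 + p_N(z) J P_N), where each p_j is a nonzero real polynomial with p_j(0) = 0, each P_j is a rank-one orthogonal projection on ℝ², and P_j ≠ P_{j+1} for j = 1, …, N−1. -/

import Mathlib

open Matrix Polynomial

noncomputable def Jmat : Matrix (Fin 2) (Fin 2) ℝ := !![0, -1; 1, 0]

def IsRankOneProjection (P : Matrix (Fin 2) (Fin 2) ℝ) : Prop :=
  ∃ v : Fin 2 → ℝ, (v 0) ^ 2 + (v 1) ^ 2 = 1 ∧ P = vecMulVec v v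

/-- The factor `1 + p(z) J P`, as a matrix with polynomial entries. -/
noncomputable def factor (p : ℝ[X]) (P : Matrix (Fin 2) (Fin 2) ℝ) :
    Matrix (Fin 2) (Fin 2) ℝ[X] :=
  1 + p • ((Jmat * P).map Polynomial.C)

namespace Fact

abbrev M2R := Matrix (Fin 2) (Fin 2) ℝ
abbrev M2P := Matrix (Fin 2) (Fin 2) ℝ[X]

def IsUnitVec (v : Fin 2 → ℝ) : Prop := (v 0) ^ 2 + (v 1) ^ 2 = 1

attribute [local simp] Matrix.mul_apply Matrix.one_apply Fin.sum_univ_two Matrix.add_apply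
  Matrix.smul_apply Matrix.map_apply Matrix.vecMulVec_apply Matrix.cons_val_zero
  Matrix.cons_val_one Matrix.head_cons smul_eq_mul Matrix.vecMul dotProduct
  Matrix.vecHead Matrix.vecTail Function.comp Matrix.transpose_apply Matrix.mulVec
  Pi.smul_apply

/-- transpose of the adjugate -/
def tadj (C : M2R) : M2R := !![C 1 1, - C 1 0; - C 0 1, C 0 0]

lemma mul_J (C : M2R) : C * Jmat = Jmat * tadj C := by
  refine Matrix.ext fun i j => ?_
  fin_cases i <;> fin_cases j <;> simp [Jmat, tadj] <;> ring

lemma tadj_vec (C : M2R) (h : C.det = 1) (v : Fin 2 → ℝ) :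
    Cᵀ *ᵥ (tadj C *ᵥ v) = v := by
  rw [Matrix.det_fin_two] at h
  funext i
  fin_cases i <;> simp [tadj] <;>
    first | linear_combination (v 0) * h | linear_combination (v 1) * h

lemma mul_vecMulVec (A : M2R) (v w : Fin 2 → ℝ) :
    A * vecMulVec v w = vecMulVec (A *ᵥ v) w := by
  refine Matrix.ext fun i j => ?_
  fin_cases i <;> fin_cases j <;> simp <;> ring

lemma vecMulVec_mul (A : M2R) (v w : Fin 2 → ℝ) :
    vecMulVec v w * A = vecMulVec v (Aᵀ *ᵥ w) := by
  refine Matrix.ext fun i j => ?_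
  fin_cases i <;> fin_cases j <;> simp <;> ring

lemma factor_add (p q : ℝ[X]) (v : Fin 2 → ℝ) :
    factor p (vecMulVec v v) * factor q (vecMulVec v v) = factor (p + q) (vecMulVec v v) := by
  refine Matrix.ext fun i j => ?_
  fin_cases i <;> fin_cases j <;> simp [_root_.factor, Jmat, _root_.map_mul] <;> ring

lemma factor_zero (P : M2R) : factor 0 P = 1 := by simp [_root_.factor]

lemma factor_smul_vec (r : ℝ) (u : Fin 2 → ℝ) (p : ℝ[X]) :
    factor p (vecMulVec (r • u) (r • u)) = factor (Polynomial.C (r * r) * p) (vecMulVec u u) := by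
  refine Matrix.ext fun i j => ?_
  fin_cases i <;> fin_cases j <;> simp [_root_.factor, Jmat, _root_.map_mul] <;> ring

lemma det_one_add (e : ℝ) (u : Fin 2 → ℝ) : (1 + e • (Jmat * vecMulVec u u)).det = 1 := by
  simp [Matrix.det_fin_two, Jmat]; ring

noncomputable def mC (M : M2R) : M2P := M.map Polynomial.C

lemma mC_mul (A B : M2R) : mC (A * B) = mC A * mC B := by
  simp [mC, Matrix.map_mul]

lemma mC_one : mC 1 = 1 := by simp [mC]

lemma factor_const (e : ℝ) (u : Fin 2 → ℝ) :
    factor (Polynomial.C e) (vecMulVec u u) = mC (1 + e • (Jmat * vecMulVec u u)) := by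
  refine Matrix.ext fun i j => ?_
  fin_cases i <;> fin_cases j <;> simp [_root_.factor, mC, Jmat, _root_.map_mul] <;> ring

lemma ev0_factor (p : ℝ[X]) (P : M2R) (h : p.eval 0 = 0) :
    (factor p P).map (Polynomial.eval 0) = 1 := by
  refine Matrix.ext fun i j => ?_
  fin_cases i <;> fin_cases j <;> simp [_root_.factor, h]

lemma ev0_mC (M : M2R) : (mC M).map (Polynomial.eval 0) = M := by
  refine Matrix.ext fun i j => ?_
  fin_cases i <;> fin_cases j <;> simp [mC]

/-- The key conjugation identity. -/
lemma conj_identity (Cm : M2R) (h : Cm.det = 1) (v : Fin 2 → ℝ) :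
    Cm * (Jmat * vecMulVec v v)
      = (Jmat * vecMulVec (tadj Cm *ᵥ v) (tadj Cm *ᵥ v)) * Cm := by
  rw [← mul_assoc, mul_J, mul_assoc, mul_vecMulVec, mul_assoc, vecMulVec_mul, tadj_vec Cm h]

lemma conj_factor (Cm : M2R) (h : Cm.det = 1) (v : Fin 2 → ℝ) (p : ℝ[X]) :
    mC Cm * factor p (vecMulVec v v)
      = factor p (vecMulVec (tadj Cm *ᵥ v) (tadj Cm *ᵥ v)) * mC Cm := by
  simp only [_root_.factor, mul_add, add_mul, mul_one, one_mul, mC]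
  rw [mul_smul_comm, smul_mul_assoc, ← Matrix.map_mul, ← Matrix.map_mul, conj_identity Cm h]


/-! ### Stage 1: Euclidean algorithm -/

noncomputable def Up (p : ℝ[X]) : M2P := !![1, p; 0, 1]
noncomputable def Lo (p : ℝ[X]) : M2P := !![1, 0; p, 1]

lemma up_eq_factor (p : ℝ[X]) : Up p = factor (-p) (vecMulVec ![0,1] ![0,1]) := by
  refine Matrix.ext fun i j => ?_
  fin_cases i <;> fin_cases j <;> simp [Up, _root_.factor, Jmat]

lemma lo_eq_factor (p : ℝ[X]) : Lo p = factor p (vecMulVec ![1,0] ![1,0]) := by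
  refine Matrix.ext fun i j => ?_
  fin_cases i <;> fin_cases j <;> simp [Lo, _root_.factor, Jmat]

lemma up_mul_up (p q : ℝ[X]) : Up p * Up q = Up (p + q) := by
  refine Matrix.ext fun i j => ?_
  fin_cases i <;> fin_cases j <;> simp [Up] <;> ring

lemma lo_mul_lo (p q : ℝ[X]) : Lo p * Lo q = Lo (p + q) := by
  refine Matrix.ext fun i j => ?_
  fin_cases i <;> fin_cases j <;> simp [Lo] <;> ring

lemma up_zero : Up 0 = 1 := by
  refine Matrix.ext fun i j => ?_
  fin_cases i <;> fin_cases j <;> simp [Up]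

lemma lo_zero : Lo 0 = 1 := by
  refine Matrix.ext fun i j => ?_
  fin_cases i <;> fin_cases j <;> simp [Lo]

lemma det_up (p : ℝ[X]) : (Up p).det = 1 := by simp [Up, Matrix.det_fin_two_of]
lemma det_lo (p : ℝ[X]) : (Lo p).det = 1 := by simp [Lo, Matrix.det_fin_two_of]

lemma up_mul (s : ℝ[X]) (A : M2P) :
    Up s * A = !![A 0 0 + s * A 1 0, A 0 1 + s * A 1 1; A 1 0, A 1 1] := by
  refine Matrix.ext fun i j => ?_
  fin_cases i <;> fin_cases j <;> simp [Up] <;> ring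

lemma lo_mul (s : ℝ[X]) (A : M2P) :
    Lo s * A = !![A 0 0, A 0 1; s * A 0 0 + A 1 0, s * A 0 1 + A 1 1] := by
  refine Matrix.ext fun i j => ?_
  fin_cases i <;> fin_cases j <;> simp [Lo] <;> ring

/-- products of "one-factor" matrices built from a list of (polynomial, unit vector) data -/
noncomputable def prodV (L : List (ℝ[X] × (Fin 2 → ℝ))) : M2P :=
  (L.map fun x => factor x.1 (vecMulVec x.2 x.2)).prod

def Pred (A : M2P) : Prop :=
  ∃ L : List (ℝ[X] × (Fin 2 → ℝ)), (∀ x ∈ L, IsUnitVec x.2) ∧ A = prodV L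

lemma pred_mul {A B : M2P} (hA : Pred A) (hB : Pred B) : Pred (A * B) := by
  obtain ⟨L1, h1, rfl⟩ := hA
  obtain ⟨L2, h2, rfl⟩ := hB
  refine ⟨L1 ++ L2, ?_, ?_⟩
  · intro x hx; rcases List.mem_append.mp hx with h | h
    · exact h1 x h
    · exact h2 x h
  · simp [prodV]

lemma pred_up (p : ℝ[X]) : Pred (Up p) := by
  refine ⟨[(-p, ![0,1])], ?_, ?_⟩
  · rintro x hx; simp at hx; subst hx; simp [IsUnitVec]
  · simp [prodV, up_eq_factor]

lemma pred_lo (p : ℝ[X]) : Pred (Lo p) := by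
  refine ⟨[(p, ![1,0])], ?_, ?_⟩
  · rintro x hx; simp at hx; subst hx; simp [IsUnitVec]
  · simp [prodV, lo_eq_factor]

/-- the upper-triangular case -/
lemma pred_upper (a b d : ℝ[X]) (had : a * d = 1) : Pred !![a, b; 0, d] := by
  have key : !![a, b; 0, d]
      = Lo (-1) * (Up (1 - d) * (Lo a * Up (b + (d - 1) * (b + d)))) := by
    refine Matrix.ext fun i j => ?_
    fin_cases i <;> fin_cases j <;> simp [Lo, Up] <;>
      first
        | linear_combination had
        | linear_combination (-1 : ℝ[X]) * had
        | linear_combination (d - 1) * (b + d - 1) * had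
        | linear_combination (1 - d) * (b + d - 1) * had
        | linear_combination (b + (d - 1) * (b + d)) * had
        | linear_combination (-(b + (d - 1) * (b + d))) * had
  rw [key]
  exact pred_mul (pred_lo _) (pred_mul (pred_up _) (pred_mul (pred_lo _) (pred_up _)))

lemma pred_c0 (A : M2P) (hdet : A.det = 1) (hc : A 1 0 = 0) : Pred A := by
  have hA : A = !![A 0 0, A 0 1; 0, A 1 1] := by
    refine Matrix.ext fun i j => ?_
    fin_cases i <;> fin_cases j <;> simp [hc]
  rw [Matrix.det_fin_two, hc, mul_zero, sub_zero] at hdet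
  rw [hA]; exact pred_upper _ _ _ hdet

lemma euclid : ∀ (n : ℕ) (A : M2P), A.det = 1 → (A 1 0).natDegree < n → Pred A := by
  intro n
  induction n with
  | zero => intro A _ h; exact absurd h (Nat.not_lt_zero _)
  | succ n IH =>
    intro A hdet hdeg
    by_cases hc : A 1 0 = 0
    · exact pred_c0 A hdet hc
    by_cases hC : (A 1 0).natDegree = 0
    · -- constant nonzero corner
      obtain ⟨γ, hγ⟩ := Polynomial.natDegree_eq_zero.mp hC
      have hγ0 : γ ≠ 0 := by rintro rfl; simp at hγ; exact hc hγ.symm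
      have hinv : Polynomial.C γ * Polynomial.C γ⁻¹ = (1 : ℝ[X]) := by
        rw [← Polynomial.C_mul, mul_inv_cancel₀ hγ0, Polynomial.C_1]
      have hc'' : (Lo (-(A 1 0)) * (Up (Polynomial.C γ⁻¹ * (1 - A 0 0)) * A)) 1 0 = 0 := by
        simp [Lo, Up]
        rw [← hγ]
        ring_nf
        linear_combination (A 0 0 - 1) * Polynomial.C γ * hinv
      have hdet'' : (Lo (-(A 1 0)) * (Up (Polynomial.C γ⁻¹ * (1 - A 0 0)) * A)).det = 1 := by
        rw [Matrix.det_mul, Matrix.det_mul, det_lo, det_up, hdet]; ring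
      have hpred'' := pred_c0 _ hdet'' hc''
      have hback : A = Up (-(Polynomial.C γ⁻¹ * (1 - A 0 0)))
          * (Lo (A 1 0) * (Lo (-(A 1 0)) * (Up (Polynomial.C γ⁻¹ * (1 - A 0 0)) * A))) := by
        rw [← mul_assoc (Lo (A 1 0)), lo_mul_lo, add_neg_cancel, lo_zero, one_mul,
          ← mul_assoc, up_mul_up, neg_add_cancel, up_zero, one_mul]
      rw [hback]
      exact pred_mul (pred_up _) (pred_mul (pred_lo _) hpred'')
    · -- degree ≥ 1 corner: Euclidean division
      have hlc : (A 1 0).leadingCoeff ≠ 0 := Polynomial.leadingCoeff_ne_zero.mpr hc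
      have hm : ((A 1 0) * Polynomial.C (A 1 0).leadingCoeff⁻¹).Monic :=
        Polynomial.monic_mul_leadingCoeff_inv hc
      set q1 : ℝ[X] := Polynomial.C (A 1 0).leadingCoeff⁻¹
        * (A 0 0 /ₘ ((A 1 0) * Polynomial.C (A 1 0).leadingCoeff⁻¹)) with hq1
      set r : ℝ[X] := A 0 0 %ₘ ((A 1 0) * Polynomial.C (A 1 0).leadingCoeff⁻¹) with hr
      have ha : A 0 0 = A 1 0 * q1 + r := by
        have h := Polynomial.modByMonic_add_div (A 0 0) ((A 1 0) * Polynomial.C (A 1 0).leadingCoeff⁻¹)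
        rw [hq1, hr]; linear_combination (-1 : ℝ[X]) * h
      have hrdeg : r.degree < (A 1 0).degree := by
        have h1 := Polynomial.degree_modByMonic_lt (A 0 0) hm
        rwa [Polynomial.degree_mul_leadingCoeff_inv _ hc] at h1
      have hA'00 : (Up (-q1) * A) 0 0 = r := by
        simp [Up]; linear_combination ha
      have h10' : (Up (-q1) * A) 1 0 = A 1 0 := by simp [Up]
      have hr0 : r ≠ 0 := by
        intro h0
        have hd : (Up (-q1) * A).det = 1 := by
          rw [Matrix.det_mul, det_up, hdet, one_mul]
        rw [Matrix.det_fin_two, hA'00, h10', h0, zero_mul, zero_sub] at hd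
        have hu : (A 1 0) * (-(Up (-q1) * A) 0 1) = 1 := by linear_combination hd
        exact hC (Polynomial.natDegree_eq_zero_of_isUnit (IsUnit.of_mul_eq_one _ hu))
      have hm2 : (r * Polynomial.C r.leadingCoeff⁻¹).Monic :=
        Polynomial.monic_mul_leadingCoeff_inv hr0
      set q2 : ℝ[X] := Polynomial.C r.leadingCoeff⁻¹
        * ((A 1 0) /ₘ (r * Polynomial.C r.leadingCoeff⁻¹)) with hq2
      set r2 : ℝ[X] := (A 1 0) %ₘ (r * Polynomial.C r.leadingCoeff⁻¹) with hr2
      have hc2 : A 1 0 = r * q2 + r2 := by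
        have h := Polynomial.modByMonic_add_div (A 1 0) (r * Polynomial.C r.leadingCoeff⁻¹)
        rw [hq2, hr2]; linear_combination (-1 : ℝ[X]) * h
      have hr2deg : r2.degree < r.degree := by
        have h1 := Polynomial.degree_modByMonic_lt (A 1 0) hm2
        rwa [Polynomial.degree_mul_leadingCoeff_inv _ hr0] at h1
      have h10'' : (Lo (-q2) * (Up (-q1) * A)) 1 0 = r2 := by
        simp [Lo, Up]; linear_combination (-q2) * ha + hc2
      have hdet'' : (Lo (-q2) * (Up (-q1) * A)).det = 1 := by
        rw [Matrix.det_mul, Matrix.det_mul, det_lo, det_up, hdet]; ring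
      have hstep : ((Lo (-q2) * (Up (-q1) * A)) 1 0).natDegree < n := by
        rw [h10'']
        rcases eq_or_ne r2 0 with h | h
        · rw [h]; simp only [Polynomial.natDegree_zero]
          have := Nat.pos_of_ne_zero hC; omega
        · have l1 : r2.natDegree < r.natDegree := Polynomial.natDegree_lt_natDegree h hr2deg
          have l2 : r.natDegree < (A 1 0).natDegree := Polynomial.natDegree_lt_natDegree hr0 hrdeg
          omega
      have hpred'' := IH _ hdet'' hstep
      have hback : A = Up q1 * (Lo q2 * (Lo (-q2) * (Up (-q1) * A))) := by
        rw [← mul_assoc (Lo q2), lo_mul_lo, add_neg_cancel, lo_zero, one_mul,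
          ← mul_assoc, up_mul_up, ← sub_eq_add_neg, sub_self, up_zero, one_mul]
      rw [hback]
      exact pred_mul (pred_up _) (pred_mul (pred_lo _) hpred'')

lemma pred_of_det_one (A : M2P) (hdet : A.det = 1) : Pred A :=
  euclid ((A 1 0).natDegree + 1) A hdet (Nat.lt_succ_self _)


/-! ### Stage 2: make all polynomials vanish at 0 -/

lemma unitvec_ne_zero {v : Fin 2 → ℝ} (hv : IsUnitVec v) : v ≠ 0 := by
  intro h; rw [h] at hv; simp [IsUnitVec] at hv

lemma push_step (Cm : M2R) (h : Cm.det = 1) (v : Fin 2 → ℝ) (hv : IsUnitVec v) (p : ℝ[X]) :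
    ∃ (p' : ℝ[X]) (u : Fin 2 → ℝ) (Cm' : M2R),
      IsUnitVec u ∧ p'.eval 0 = 0 ∧ Cm'.det = 1 ∧
      mC Cm * factor p (vecMulVec v v) = factor p' (vecMulVec u u) * mC Cm' := by
  classical
  set w : Fin 2 → ℝ := tadj Cm *ᵥ v with hw
  have hwv : Cmᵀ *ᵥ w = v := by rw [hw]; exact tadj_vec Cm h v
  have hwne : w ≠ 0 := by
    intro h0
    have hv0 : v = 0 := by rw [← hwv, h0, Matrix.mulVec_zero]
    exact unitvec_ne_zero hv hv0
  set s : ℝ := (w 0)^2 + (w 1)^2 with hs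
  have hs0 : s ≠ 0 := by
    intro h0
    apply hwne
    have h1 : w 0 = 0 := by nlinarith [sq_nonneg (w 0), sq_nonneg (w 1)]
    have h2 : w 1 = 0 := by nlinarith [sq_nonneg (w 0), sq_nonneg (w 1)]
    funext i; fin_cases i <;> simp [h1, h2]
  have hspos : 0 < s := lt_of_le_of_ne (by positivity) (Ne.symm hs0)
  set nw : ℝ := Real.sqrt s with hnw
  have hnw0 : nw ≠ 0 := by rw [hnw]; exact Real.sqrt_ne_zero'.mpr hspos
  have hnwsq : nw * nw = s := Real.mul_self_sqrt (le_of_lt hspos)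
  set u : Fin 2 → ℝ := nw⁻¹ • w with hu
  have hueq : w = nw • u := by
    rw [hu, smul_smul, mul_inv_cancel₀ hnw0, one_smul]
  have huu : IsUnitVec u := by
    have key : (nw⁻¹ * w 0)^2 + (nw⁻¹ * w 1)^2 = (nw⁻¹)^2 * s := by rw [hs]; ring
    rw [IsUnitVec, hu]
    simp only [Pi.smul_apply, smul_eq_mul]
    rw [key, ← hnwsq]
    field_simp
  set e : ℝ := (Polynomial.C s * p).eval 0 with he
  refine ⟨Polynomial.C s * p - Polynomial.C e, u,
    (1 + e • (Jmat * vecMulVec u u)) * Cm, huu, by simp [he], ?_, ?_⟩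
  · rw [Matrix.det_mul, det_one_add, h, one_mul]
  · calc mC Cm * factor p (vecMulVec v v)
        = factor p (vecMulVec w w) * mC Cm := by rw [conj_factor Cm h v, hw]
      _ = factor (Polynomial.C s * p) (vecMulVec u u) * mC Cm := by
            rw [hueq, factor_smul_vec, hnwsq]
      _ = (factor (Polynomial.C s * p - Polynomial.C e) (vecMulVec u u)
            * factor (Polynomial.C e) (vecMulVec u u)) * mC Cm := by
            rw [factor_add]; ring_nf
      _ = factor (Polynomial.C s * p - Polynomial.C e) (vecMulVec u u)
            * mC ((1 + e • (Jmat * vecMulVec u u)) * Cm) := by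
            rw [mC_mul, factor_const, mul_assoc]

lemma push : ∀ (L : List (ℝ[X] × (Fin 2 → ℝ))), (∀ x ∈ L, IsUnitVec x.2) →
    ∀ Cm : M2R, Cm.det = 1 →
    ∃ (L' : List (ℝ[X] × (Fin 2 → ℝ))) (D : M2R),
      D.det = 1 ∧ (∀ x ∈ L', IsUnitVec x.2 ∧ x.1.eval 0 = 0) ∧
      mC Cm * prodV L = prodV L' * mC D := by
  intro L
  induction L with
  | nil =>
    intro _ Cm h
    exact ⟨[], Cm, h, by simp, by simp [prodV]⟩
  | cons x L IH =>
    intro hL Cm h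
    obtain ⟨p', u, Cm', huu, hev, hdet', hid⟩ := push_step Cm h x.2 (hL x (List.mem_cons_self)) x.1
    obtain ⟨L', D, hD, hL', hid2⟩ := IH (fun y hy => hL y (List.mem_cons_of_mem x hy)) Cm' hdet'
    refine ⟨(p', u) :: L', D, hD, ?_, ?_⟩
    · rintro y hy
      rcases List.mem_cons.mp hy with rfl | hy
      · exact ⟨huu, hev⟩
      · exact hL' y hy
    · have hexp : prodV (x :: L) = factor x.1 (vecMulVec x.2 x.2) * prodV L := by
        simp [prodV]
      rw [hexp, ← mul_assoc, hid, mul_assoc, hid2]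
      simp [prodV, mul_assoc]

/-- Stage 1 + Stage 2 combined -/
lemma decomp (A : M2P) (h0 : A.map (Polynomial.eval 0) = 1) (hdet : A.det = 1) :
    ∃ L : List (ℝ[X] × (Fin 2 → ℝ)),
      (∀ x ∈ L, IsUnitVec x.2 ∧ x.1.eval 0 = 0) ∧ A = prodV L := by
  obtain ⟨L, hL, rfl⟩ := pred_of_det_one A hdet
  obtain ⟨L', D, hD, hL', hid⟩ := push L hL 1 (by simp)
  rw [mC_one, one_mul] at hid
  -- evaluate at 0 to show D = 1
  have hPhi : ∀ M : M2P, M.map (Polynomial.eval 0) = (Polynomial.evalRingHom 0).mapMatrix M :=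
    fun M => rfl
  have hD1 : D = 1 := by
    have hthis := congrArg (Matrix.map · (Polynomial.eval 0)) hid
    rw [h0] at hthis
    have hprod : (prodV L').map (Polynomial.eval 0) = 1 := by
      rw [prodV, hPhi, map_list_prod]
      apply List.prod_eq_one
      intro x hx
      simp only [List.map_map, List.mem_map] at hx
      obtain ⟨y, hy, rfl⟩ := hx
      simp only [Function.comp, RingHom.mapMatrix_apply]
      have hy0 : Polynomial.eval 0 y.1 = 0 := (hL' y hy).2
      rw [Polynomial.coe_evalRingHom]
      exact ev0_factor _ _ (by simpa using hy0)
    rw [hPhi, _root_.map_mul, ← hPhi, ← hPhi, hprod, one_mul, ev0_mC] at hthis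
    exact hthis.symm
  rw [hD1, mC_one, mul_one] at hid
  exact ⟨L', hL', hid⟩


/-! ### Stage 3: normalization (discard zeros, merge equal neighbours) -/

noncomputable def prodF (l : List (ℝ[X] × M2R)) : M2P := (l.map fun x => factor x.1 x.2).prod

lemma factor_add_proj {P : M2R} (hP : IsRankOneProjection P) (p q : ℝ[X]) :
    factor p P * factor q P = factor (p + q) P := by
  obtain ⟨v, _, rfl⟩ := hP
  exact factor_add p q v

open scoped Classical in
noncomputable def cons1 (p : ℝ[X]) (P : M2R) : List (ℝ[X] × M2R) → List (ℝ[X] × M2R)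
  | [] => if p = 0 then [] else [(p, P)]
  | (q, Q) :: l' =>
    if p = 0 then (q, Q) :: l'
    else if P = Q then (if p + q = 0 then l' else (p + q, P) :: l')
    else (p, P) :: (q, Q) :: l'

noncomputable def norm : List (ℝ[X] × M2R) → List (ℝ[X] × M2R)
  | [] => []
  | x :: l => cons1 x.1 x.2 (norm l)

lemma cons1_spec (p : ℝ[X]) (P : M2R) (hp : p.eval 0 = 0) (hP : IsRankOneProjection P)
    (t : List (ℝ[X] × M2R))
    (ht : ∀ x ∈ t, x.1 ≠ 0 ∧ x.1.eval 0 = 0 ∧ IsRankOneProjection x.2)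
    (htc : t.Chain' (fun a b => a.2 ≠ b.2)) :
    (∀ x ∈ cons1 p P t, x.1 ≠ 0 ∧ x.1.eval 0 = 0 ∧ IsRankOneProjection x.2) ∧
    (cons1 p P t).Chain' (fun a b => a.2 ≠ b.2) ∧
    prodF (cons1 p P t) = factor p P * prodF t := by
  classical
  match t with
  | [] =>
    rw [cons1]
    split_ifs with h
    · subst h
      exact ⟨by simp, by simp [List.Chain'], by simp [prodF, factor_zero]⟩
    · refine ⟨?_, ?_, ?_⟩
      · rintro x hx; simp at hx; subst hx; exact ⟨h, hp, hP⟩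
      · simp [List.Chain']
      · simp [prodF]
  | (q, Q) :: l' =>
    rw [cons1]
    split_ifs with h1 h2 h3
    · subst h1
      exact ⟨ht, htc, by rw [factor_zero, one_mul]⟩
    · -- P = Q and p + q = 0 : drop
      subst h2
      have hq := ht (q, P) (List.mem_cons_self)
      refine ⟨fun x hx => ht x (List.mem_cons_of_mem _ hx), htc.tail, ?_⟩
      have : prodF ((q, P) :: l') = factor q P * prodF l' := by simp [prodF]
      rw [this, ← mul_assoc, factor_add_proj hP, h3, factor_zero, one_mul]
    · -- P = Q and p + q ≠ 0 : merge
      subst h2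
      have hq := ht (q, P) (List.mem_cons_self)
      obtain ⟨hhead, htail⟩ := List.isChain_cons.mp htc
      refine ⟨?_, ?_, ?_⟩
      · rintro x hx
        rcases List.mem_cons.mp hx with rfl | hx
        · exact ⟨h3, by simp [hp, hq.2.1], hP⟩
        · exact ht x (List.mem_cons_of_mem _ hx)
      · exact List.isChain_cons.mpr ⟨hhead, htail⟩
      · have h1' : prodF ((q, P) :: l') = factor q P * prodF l' := by simp [prodF]
        have h2' : prodF ((p + q, P) :: l') = factor (p + q) P * prodF l' := by simp [prodF]
        rw [h1', h2', ← mul_assoc, factor_add_proj hP]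
    · -- P ≠ Q : cons
      refine ⟨?_, ?_, by simp [prodF]⟩
      · rintro x hx
        rcases List.mem_cons.mp hx with rfl | hx
        · exact ⟨h1, hp, hP⟩
        · exact ht x hx
      · exact List.isChain_cons_cons.mpr ⟨h2, htc⟩

lemma norm_spec : ∀ (l : List (ℝ[X] × M2R)),
    (∀ x ∈ l, x.1.eval 0 = 0 ∧ IsRankOneProjection x.2) →
    (∀ x ∈ norm l, x.1 ≠ 0 ∧ x.1.eval 0 = 0 ∧ IsRankOneProjection x.2) ∧
    (norm l).Chain' (fun a b => a.2 ≠ b.2) ∧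
    prodF (norm l) = prodF l := by
  intro l
  induction l with
  | nil => intro _; exact ⟨by simp [norm], by simp [norm, List.Chain'], rfl⟩
  | cons x l IH =>
    intro hl
    obtain ⟨h1, h2, h3⟩ := IH (fun y hy => hl y (List.mem_cons_of_mem _ hy))
    have hx := hl x (List.mem_cons_self)
    obtain ⟨g1, g2, g3⟩ := cons1_spec x.1 x.2 hx.1 hx.2 (norm l) h1 h2
    refine ⟨g1, g2, ?_⟩
    rw [norm, g3, h3]
    simp [prodF]

end Fact

theorem exists_factorization (A : Matrix (Fin 2) (Fin 2) ℝ[X])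
    (h0 : A.map (Polynomial.eval 0) = 1) (hdet : A.det = 1) :
    ∃ (N : ℕ) (p : Fin N → ℝ[X]) (P : Fin N → Matrix (Fin 2) (Fin 2) ℝ),
      (∀ j, p j ≠ 0 ∧ (p j).eval 0 = 0 ∧ IsRankOneProjection (P j)) ∧
      (∀ (i : ℕ) (hi : i + 1 < N), P ⟨i, Nat.lt_of_succ_lt hi⟩ ≠ P ⟨i + 1, hi⟩) ∧
      A = (List.ofFn (fun j : Fin N => factor (p j) (P j))).prod := by
  obtain ⟨L, hL, hA⟩ := Fact.decomp A h0 hdet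
  set l0 : List (ℝ[X] × Fact.M2R) := L.map (fun x => (x.1, vecMulVec x.2 x.2)) with hl0def
  have hl0 : ∀ x ∈ l0, x.1.eval 0 = 0 ∧ IsRankOneProjection x.2 := by
    rintro x hx
    rw [hl0def] at hx
    simp only [List.mem_map] at hx
    obtain ⟨y, hy, rfl⟩ := hx
    exact ⟨(hL y hy).2, ⟨y.2, (hL y hy).1, rfl⟩⟩
  have hprod0 : Fact.prodF l0 = Fact.prodV L := by
    rw [Fact.prodF, Fact.prodV, hl0def, List.map_map]
    rfl
  obtain ⟨h1, h2, h3⟩ := Fact.norm_spec l0 hl0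
  set l : List (ℝ[X] × Fact.M2R) := Fact.norm l0 with hldef
  refine ⟨l.length, fun j => (l.get j).1, fun j => (l.get j).2, ?_, ?_, ?_⟩
  · intro j; exact h1 _ (List.get_mem l j)
  · intro i hi
    have hc := List.isChain_iff_getElem.mp h2 i (by omega)
    exact hc
  · have : (List.ofFn (fun j : Fin l.length => factor ((l.get j).1) ((l.get j).2)))
        = l.map (fun x => factor x.1 x.2) := by
      have he : (fun j : Fin l.length => _root_.factor ((l.get j).1) ((l.get j).2))
          = (fun x : ℝ[X] × Fact.M2R => _root_.factor x.1 x.2) ∘ l.get := rfl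
      rw [he, ← List.map_ofFn, List.ofFn_get]
    rw [this, hA, ← hprod0, ← h3]
    rfl
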